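/- arXiv:2307.05546 — 5 statements merged into one kernel-verified Lean document; each statement's English description precedes it below -/
import Mathlib

section
/- Let K be a valued field with valuation ring O_K, residue field k and residue map res : O_K → k, and let f, g ∈ K[x] be nonzero polynomials. Let X = {a ∈ O_K : v(f(a)) ≤ v(g(a))}. Then there is a finite set Z ⊆ k such that either X ⊆ res⁻¹(Z) or res⁻¹(k ∖ Z) ⊆ X. -/
open Polynomial

/-- For a nonzero polynomial `f` over a valued field, there is a constant `c ≠ 0` and a
finite set `S` of residue classes such that `v (f a) = v c` off `S`. -/
private lemma stmt5_key {K : Type*} [Field K] {Γ₀ : Type*} [LinearOrderedCommGroupWithZero Γ₀]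
    (v : Valuation K Γ₀) (f : K[X]) (hf : f ≠ 0) :
    ∃ (c : K) (S : Set (IsLocalRing.ResidueField v.valuationSubring)), c ≠ 0 ∧ S.Finite ∧
      ∀ a : v.valuationSubring, IsLocalRing.residue v.valuationSubring a ∉ S →
        v (f.eval (a : K)) = v c := by
  classical
  set O := v.valuationSubring with hO
  obtain ⟨i, hi, hmax⟩ := f.support.exists_max_image (fun j => v (f.coeff j))
    (Polynomial.nonempty_support_iff.mpr hf)
  set c := f.coeff i with hci
  have hc : c ≠ 0 := Polynomial.mem_support_iff.mp hi
  have hvc : v c ≠ 0 := by simpa using hc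
  set f₀ : K[X] := C c⁻¹ * f with hf₀
  have hcoeff : ∀ j, f₀.coeff j ∈ O := by
    intro j
    rw [hf₀, Polynomial.coeff_C_mul]
    rw [Valuation.mem_valuationSubring_iff, v.map_mul, map_inv₀]
    by_cases hj : j ∈ f.support
    · calc (v c)⁻¹ * v (f.coeff j) ≤ (v c)⁻¹ * v c := by
            exact mul_le_mul_right (hmax j hj) _
        _ = 1 := inv_mul_cancel₀ hvc
    · simp [Polynomial.notMem_support_iff.mp hj]
  set F : O[X] := ∑ j ∈ f₀.support, C (⟨f₀.coeff j, hcoeff j⟩ : O) * X ^ j with hFdef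
  have hFmap : F.map O.subtype = f₀ := by
    rw [hFdef, Polynomial.map_sum]
    simp only [Polynomial.map_mul, Polynomial.map_C, Polynomial.map_pow, Polynomial.map_X]
    exact (f₀.as_sum_support_C_mul_X_pow).symm
  have hFeval : ∀ a : O, (O.subtype (F.eval a)) = f₀.eval (a : K) := by
    intro a
    have := Polynomial.eval₂_at_apply (p := F) O.subtype a
    rw [← Polynomial.eval_map, hFmap] at this
    exact this.symm
  set Fbar := F.map (IsLocalRing.residue O) with hFbar
  have hFbar_ne : Fbar ≠ 0 := by
    intro h0
    have hFi : F.coeff i = 1 := by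
      have h1 : O.subtype (F.coeff i) = f₀.coeff i := by
        rw [← Polynomial.coeff_map, hFmap]
      have h2 : f₀.coeff i = 1 := by
        rw [hf₀, Polynomial.coeff_C_mul, ← hci, inv_mul_cancel₀ hc]
      exact Subtype.ext (h1.trans h2)
    have : Fbar.coeff i = 1 := by
      rw [hFbar, Polynomial.coeff_map, hFi, map_one]
    rw [h0] at this
    simp at this
  refine ⟨c, {z | Fbar.IsRoot z}, hc, Polynomial.finite_setOf_isRoot hFbar_ne, ?_⟩
  intro a ha
  have hroot : Fbar.eval (IsLocalRing.residue O a) ≠ 0 := ha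
  have hres : IsLocalRing.residue O (F.eval a) ≠ 0 := by
    rwa [hFbar, Polynomial.eval_map, Polynomial.eval₂_at_apply] at hroot
  have hunit : IsUnit (F.eval a) := by
    by_contra h
    exact hres ((IsLocalRing.residue_eq_zero_iff _).mpr
      ((IsLocalRing.mem_maximalIdeal _).mpr h))
  have hv1 : v ((O.subtype (F.eval a))) = 1 := by
    obtain ⟨u, hu⟩ := hunit
    have h1 : v ((O.subtype (F.eval a))) * v (O.subtype ((u⁻¹ : Oˣ) : O)) = 1 := by
      rw [← v.map_mul, ← map_mul, ← hu, ← Units.val_mul]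
      simp
    have hle : v ((O.subtype (F.eval a))) ≤ 1 := (F.eval a).2
    have hle' : v (O.subtype ((u⁻¹ : Oˣ) : O)) ≤ 1 := ((u⁻¹ : Oˣ) : O).2
    refine le_antisymm hle ?_
    calc (1 : Γ₀) = v ((O.subtype (F.eval a))) * v (O.subtype ((u⁻¹ : Oˣ) : O)) := h1.symm
      _ ≤ v ((O.subtype (F.eval a))) * 1 := mul_le_mul_right hle' _
      _ = v ((O.subtype (F.eval a))) := mul_one _
  have hval : v (f₀.eval (a : K)) = 1 := by rw [← hFeval]; exact hv1
  have : f.eval (a : K) = c * f₀.eval (a : K) := by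
    rw [hf₀, Polynomial.eval_mul, Polynomial.eval_C, ← mul_assoc,
      mul_inv_cancel₀ hc, one_mul]
  rw [this, v.map_mul, hval, mul_one]

/-- Let `K` be a valued field (surjective valuation `v : K → Γ₀`,
multiplicative convention, so the additive inequality `v_add(f(a)) ≤ v_add(g(a))`
becomes the multiplicative inequality `v(g(a)) ≤ v(f(a))`), and let
`f, g ∈ K[x]` be nonzero.  Let `X = {a ∈ O_K : v(f(a)) ≤ v(g(a))}` (additively).
Then there is a finite `Z ⊆ k` with either `X ⊆ res⁻¹(Z)` or
`res⁻¹(k ∖ Z) ⊆ X`. -/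
theorem stmt_5 {K : Type*} [Field K] {Γ₀ : Type*} [LinearOrderedCommGroupWithZero Γ₀]
    (v : Valuation K Γ₀) (hsurj : Function.Surjective v)
    (f g : K[X]) (hf : f ≠ 0) (hg : g ≠ 0) :
    ∃ Z : Set (IsLocalRing.ResidueField v.valuationSubring), Z.Finite ∧
      ((∀ a : v.valuationSubring, v (g.eval (a : K)) ≤ v (f.eval (a : K)) →
          IsLocalRing.residue v.valuationSubring a ∈ Z) ∨
       (∀ a : v.valuationSubring, IsLocalRing.residue v.valuationSubring a ∉ Z →
          v (g.eval (a : K)) ≤ v (f.eval (a : K)))) := by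
  obtain ⟨c, Sf, hc, hSf, hvf⟩ := stmt5_key v f hf
  obtain ⟨d, Sg, hd, hSg, hvg⟩ := stmt5_key v g hg
  refine ⟨Sf ∪ Sg, hSf.union hSg, ?_⟩
  rcases le_or_gt (v d) (v c) with hle | hlt
  · refine Or.inr fun a ha => ?_
    rw [hvf a (fun h => ha (Or.inl h)), hvg a (fun h => ha (Or.inr h))]
    exact hle
  · refine Or.inl fun a hle => ?_
    by_contra ha
    rw [hvf a (fun h => ha (Or.inl h)), hvg a (fun h => ha (Or.inr h))] at hle
    exact absurd hle (not_le.mpr hlt)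
end

section
/- Let K be a henselian valued field whose residue field k is algebraically closed of characteristic 0, with value group Γ. Let f ∈ K[x] be nonzero, n ≥ 1, and X = {a ∈ O_K : f(a) is an n-th power in K}. Let Z = {u ∈ k : res(f*)(u) = 0}; then Z is finite, and: if v(e_f) ∈ nΓ then res⁻¹(k ∖ Z) ⊆ X, while if v(e_f) ∉ nΓ then X ⊆ res⁻¹(Z). In particular there is a finite set Z ⊆ k such that either X ⊆ res⁻¹(Z) or res⁻¹(k ∖ Z) ⊆ X. -/
open Polynomial

/-- Units of the valuation subring have value `1`. -/
lemma aux_val_one {K : Type*} [Field K] {Γ₀ : Type*} [LinearOrderedCommGroupWithZero Γ₀]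
    (v : Valuation K Γ₀) (a : v.valuationSubring) (ha : IsUnit a) : v (a : K) = 1 := by
  obtain ⟨u, rfl⟩ := ha
  have h1 : ((u : v.valuationSubring) : K) * ((u⁻¹ : v.valuationSubringˣ) : v.valuationSubring) = 1 := by
    norm_cast
    exact_mod_cast congrArg (Subtype.val) (u.mul_inv)
  have hle1 : v ((u : v.valuationSubring) : K) ≤ 1 := (u : v.valuationSubring).2
  have hle2 : v (((u⁻¹ : v.valuationSubringˣ) : v.valuationSubring) : K) ≤ 1 :=
    ((u⁻¹ : v.valuationSubringˣ) : v.valuationSubring).2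
  have hmul : v ((u : v.valuationSubring) : K) *
      v (((u⁻¹ : v.valuationSubringˣ) : v.valuationSubring) : K) = 1 := by
    rw [← v.map_mul, h1, v.map_one]
  refine le_antisymm hle1 ?_
  calc (1 : Γ₀) = v ((u : v.valuationSubring) : K) *
      v (((u⁻¹ : v.valuationSubringˣ) : v.valuationSubring) : K) := hmul.symm
    _ ≤ v ((u : v.valuationSubring) : K) * 1 := mul_le_mul_right hle2 _
    _ = v ((u : v.valuationSubring) : K) := mul_one _

/-- Elements with nonzero residue are units. -/
lemma aux_isUnit {R : Type*} [CommRing R] [IsLocalRing R] (a : R)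
    (ha : IsLocalRing.residue R a ≠ 0) : IsUnit a := by
  by_contra h
  exact ha ((IsLocalRing.residue_eq_zero_iff _).2 ((IsLocalRing.mem_maximalIdeal a).2 h))

/-- Hensel: units of a henselian local ring with algebraically closed residue field of
characteristic zero have `n`-th roots. -/
lemma aux_nth_root {R : Type*} [CommRing R] [HenselianLocalRing R]
    [IsAlgClosed (IsLocalRing.ResidueField R)] [CharZero (IsLocalRing.ResidueField R)]
    (n : ℕ) (hn : 1 ≤ n) (u : R) (hu : IsUnit u) : ∃ s : R, s ^ n = u := by
  have hures : IsLocalRing.residue R u ≠ 0 := by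
    intro h
    exact (IsLocalRing.mem_maximalIdeal u).1 ((IsLocalRing.residue_eq_zero_iff _).1 h) hu
  obtain ⟨t, ht⟩ := IsAlgClosed.exists_pow_nat_eq (IsLocalRing.residue R u) (k := _)
    (Nat.lt_of_lt_of_le Nat.zero_lt_one hn)
  have ht0 : t ≠ 0 := by
    intro h
    rw [h, zero_pow (by omega)] at ht
    exact hures ht.symm
  obtain ⟨t₀, ht₀⟩ := IsLocalRing.residue_surjective (R := R) t
  have hmon : (X ^ n - C u).Monic := monic_X_pow_sub_C u (by omega)
  have heval : (X ^ n - C u).eval t₀ ∈ IsLocalRing.maximalIdeal R := by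
    rw [← IsLocalRing.residue_eq_zero_iff]
    simp only [eval_sub, eval_pow, eval_X, eval_C, map_sub, map_pow, ht₀, ht]
    exact sub_self _
  have hder : IsUnit ((X ^ n - C u).derivative.eval t₀) := by
    apply aux_isUnit
    have : (X ^ n - C u).derivative = C (n : R) * X ^ (n - 1) := by
      simp [derivative_X_pow]
    rw [this]
    simp only [eval_mul, eval_pow, eval_C, eval_X, map_mul, map_pow, ht₀]
    have hres_n : IsLocalRing.residue R ((n : R)) = (n : IsLocalRing.ResidueField R) := by
      simp
    rw [hres_n]
    exact mul_ne_zero (Nat.cast_ne_zero.2 (by omega)) (pow_ne_zero _ ht0)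
  obtain ⟨s, hs, -⟩ := HenselianLocalRing.is_henselian (X ^ n - C u) hmon t₀ heval hder
  refine ⟨s, ?_⟩
  have := hs
  simp only [IsRoot, eval_sub, eval_pow, eval_X, eval_C, sub_eq_zero] at this
  exact this

/-- Let `K` be a henselian valued field (surjective valuation
`v : K → Γ₀`, multiplicative convention; the additive value group `Γ` is the
set of nonzero elements of `Γ₀`, and membership in `nΓ` becomes being an `n`-th
power of a nonzero element) whose residue field is algebraically closed of
characteristic 0.  Let `f ∈ K[x]` be nonzero, `n ≥ 1`,
`X = {a ∈ O_K : f(a) is an n-th power in K}`, `e = e_f` a coefficient of `f` of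
maximal multiplicative valuation, `F ∈ O_K[x]` a representative of
`f* = f / e_f`, and `Z = {u ∈ k : res(f*)(u) = 0}`.  Then `Z` is finite; if
`v(e_f) ∈ nΓ` then `res⁻¹(k ∖ Z) ⊆ X`, while if `v(e_f) ∉ nΓ` then
`X ⊆ res⁻¹(Z)`.  In particular there is a finite `Z' ⊆ k` such that either
`X ⊆ res⁻¹(Z')` or `res⁻¹(k ∖ Z') ⊆ X`. -/
theorem stmt_6 {K : Type*} [Field K] {Γ₀ : Type*} [LinearOrderedCommGroupWithZero Γ₀]
    (v : Valuation K Γ₀) (hsurj : Function.Surjective v)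
    [HenselianLocalRing v.valuationSubring]
    [IsAlgClosed (IsLocalRing.ResidueField v.valuationSubring)]
    [CharZero (IsLocalRing.ResidueField v.valuationSubring)]
    (f : K[X]) (hf : f ≠ 0) (n : ℕ) (hn : 1 ≤ n)
    (e : K) (i : ℕ) (he : f.coeff i = e) (hmax : ∀ j, v (f.coeff j) ≤ v e)
    (F : Polynomial v.valuationSubring)
    (hF : F.map (algebraMap v.valuationSubring K) = Polynomial.C e⁻¹ * f) :
    {u : IsLocalRing.ResidueField v.valuationSubring |
        (F.map (IsLocalRing.residue v.valuationSubring)).eval u = 0}.Finite ∧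
    ((∃ γ : Γ₀, γ ≠ 0 ∧ v e = γ ^ n) →
      ∀ a : v.valuationSubring,
        IsLocalRing.residue v.valuationSubring a ∉
          {u | (F.map (IsLocalRing.residue v.valuationSubring)).eval u = 0} →
        ∃ b : K, b ^ n = f.eval (a : K)) ∧
    (¬ (∃ γ : Γ₀, γ ≠ 0 ∧ v e = γ ^ n) →
      ∀ a : v.valuationSubring, (∃ b : K, b ^ n = f.eval (a : K)) →
        IsLocalRing.residue v.valuationSubring a ∈
          {u | (F.map (IsLocalRing.residue v.valuationSubring)).eval u = 0}) ∧
    (∃ Z' : Set (IsLocalRing.ResidueField v.valuationSubring), Z'.Finite ∧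
      ((∀ a : v.valuationSubring, (∃ b : K, b ^ n = f.eval (a : K)) →
          IsLocalRing.residue v.valuationSubring a ∈ Z') ∨
       (∀ a : v.valuationSubring, IsLocalRing.residue v.valuationSubring a ∉ Z' →
          ∃ b : K, b ^ n = f.eval (a : K)))) := by
  have he0 : e ≠ 0 := by
    intro h
    apply hf
    ext j
    have hj := hmax j
    rw [h, v.map_zero] at hj
    have : v (f.coeff j) = 0 := le_antisymm hj (zero_le')
    simpa using v.zero_iff.1 this
  -- The i-th coefficient of F is 1.
  have hFi : F.coeff i = 1 := by
    have h1 : algebraMap v.valuationSubring K (F.coeff i) = 1 := by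
      have h := congrArg (fun p => p.coeff i) hF
      simp only [coeff_map, coeff_C_mul, he] at h
      rw [h, inv_mul_cancel₀ he0]
    have hinj : Function.Injective (algebraMap v.valuationSubring K) := Subtype.val_injective
    exact hinj (by rw [h1, map_one])
  -- The reduced polynomial is nonzero.
  have hFbar : F.map (IsLocalRing.residue v.valuationSubring) ≠ 0 := by
    intro h
    have := congrArg (fun p => p.coeff i) h
    simp only [coeff_map, hFi, map_one, coeff_zero] at this
    exact one_ne_zero this
  have hfin : {u : IsLocalRing.ResidueField v.valuationSubring |
      (F.map (IsLocalRing.residue v.valuationSubring)).eval u = 0}.Finite :=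
    Polynomial.finite_setOf_isRoot hFbar
  -- f.eval a = e * F.eval a
  have heval : ∀ a : v.valuationSubring,
      f.eval (a : K) = e * ((F.eval a : v.valuationSubring) : K) := by
    intro a
    have h := congrArg (fun p => p.eval (a : K)) hF
    simp only [eval_mul, eval_C] at h
    rw [eval_map] at h
    have h2 : F.eval₂ (algebraMap v.valuationSubring K) ((a : K)) =
        algebraMap v.valuationSubring K (F.eval a) := eval₂_at_apply _ _
    rw [h2] at h
    have : algebraMap v.valuationSubring K (F.eval a) = ((F.eval a : v.valuationSubring) : K) := rfl
    rw [this] at h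
    field_simp at h ⊢
    linear_combination -h
  -- residue of F.eval a is the evaluation of the reduced polynomial
  have hres : ∀ a : v.valuationSubring,
      (F.map (IsLocalRing.residue v.valuationSubring)).eval
        (IsLocalRing.residue v.valuationSubring a) =
      IsLocalRing.residue v.valuationSubring (F.eval a) := by
    intro a
    rw [eval_map]
    exact eval₂_at_apply _ _
  -- key: if residue a is not a root, then v (f.eval a) = v e
  have hkey : ∀ a : v.valuationSubring,
      IsLocalRing.residue v.valuationSubring a ∉
        {u | (F.map (IsLocalRing.residue v.valuationSubring)).eval u = 0} →
      v (f.eval (a : K)) = v e := by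
    intro a ha
    have hne : IsLocalRing.residue v.valuationSubring (F.eval a) ≠ 0 := by
      rw [← hres a]; exact ha
    have hunit : IsUnit (F.eval a) := aux_isUnit _ hne
    have hv1 : v ((F.eval a : v.valuationSubring) : K) = 1 := aux_val_one v _ hunit
    rw [heval a, v.map_mul, hv1, mul_one]
  have hve : v e ≠ 0 := fun h => he0 (v.zero_iff.1 h)
  -- part 2
  have h2 : (∃ γ : Γ₀, γ ≠ 0 ∧ v e = γ ^ n) →
      ∀ a : v.valuationSubring,
        IsLocalRing.residue v.valuationSubring a ∉
          {u | (F.map (IsLocalRing.residue v.valuationSubring)).eval u = 0} →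
        ∃ b : K, b ^ n = f.eval (a : K) := by
    rintro ⟨γ, hγ0, hγ⟩ a ha
    obtain ⟨c, hc⟩ := hsurj γ
    have hc0 : c ≠ 0 := by
      intro h; rw [h, v.map_zero] at hc; exact hγ0 hc.symm
    have hcn : c ^ n ≠ 0 := pow_ne_zero _ hc0
    set w : K := f.eval (a : K) / c ^ n with hw
    have hvw : v w = 1 := by
      rw [hw, v.map_div, hkey a ha, v.map_pow, hc, hγ, div_self (pow_ne_zero _ hγ0)]
    have hw0 : w ≠ 0 := by
      intro h; rw [h, v.map_zero] at hvw; exact zero_ne_one hvw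
    have hwmem : w ∈ v.valuationSubring := le_of_eq hvw
    have hwinvmem : w⁻¹ ∈ v.valuationSubring := by
      rw [Valuation.mem_valuationSubring_iff, v.map_inv, hvw, inv_one]
    have hwu : IsUnit (⟨w, hwmem⟩ : v.valuationSubring) := by
      refine IsUnit.of_mul_eq_one ⟨w⁻¹, hwinvmem⟩ ?_
      ext
      exact mul_inv_cancel₀ hw0
    obtain ⟨s, hs⟩ := aux_nth_root n hn _ hwu
    refine ⟨(s : K) * c, ?_⟩
    have hsK : ((s : K)) ^ n = w := by
      have := congrArg (Subtype.val) hs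
      push_cast at this
      exact this
    rw [mul_pow, hsK, hw, div_mul_cancel₀ _ hcn]
  -- part 3
  have h3 : (¬ (∃ γ : Γ₀, γ ≠ 0 ∧ v e = γ ^ n)) →
      ∀ a : v.valuationSubring, (∃ b : K, b ^ n = f.eval (a : K)) →
        IsLocalRing.residue v.valuationSubring a ∈
          {u | (F.map (IsLocalRing.residue v.valuationSubring)).eval u = 0} := by
    rintro hne a ⟨b, hb⟩
    by_contra ha
    have hva : v (f.eval (a : K)) = v e := hkey a ha
    have hvb : v b ^ n = v e := by rw [← v.map_pow, hb, hva]
    have hb0 : v b ≠ 0 := by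
      intro h
      rw [h, zero_pow (by omega)] at hvb
      exact hve hvb.symm
    exact hne ⟨v b, hb0, hvb.symm⟩
  refine ⟨hfin, h2, h3, {u | (F.map (IsLocalRing.residue v.valuationSubring)).eval u = 0},
    hfin, ?_⟩
  by_cases hcase : ∃ γ : Γ₀, γ ≠ 0 ∧ v e = γ ^ n
  · exact Or.inr (h2 hcase)
  · exact Or.inl (h3 hcase)
end

section
/- Let K be a henselian valued field and let K₀ ⊆ K be a subfield that is relatively algebraically closed in K (every element of K that is algebraic over K₀ already lies in K₀), equipped with the restriction of the valuation of K. Then K₀ is henselian, i.e., its valuation ring O_{K₀} = O_K ∩ K₀ is a henselian local ring. -/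
/-- In the valuation subring of a valued field, membership in the maximal ideal
is equivalent to having valuation `< 1`. -/
lemma aux_mem_maximalIdeal_iff {K : Type*} [Field K] {Γ₀ : Type*}
    [LinearOrderedCommGroupWithZero Γ₀] (v : Valuation K Γ₀)
    (x : v.valuationSubring) :
    x ∈ IsLocalRing.maximalIdeal v.valuationSubring ↔ v (x : K) < 1 := by
  rw [IsLocalRing.mem_maximalIdeal, mem_nonunits_iff,
    (Valuation.valuationSubring.integers v).isUnit_iff_valuation_eq_one]
  have hle : v (x : K) ≤ 1 := x.2
  constructor
  · intro h
    exact lt_of_le_of_ne hle h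
  · intro h h'
    exact absurd h' (ne_of_lt h)

/-- Let `K` be a henselian valued field (surjective valuation
`v : K → Γ₀`, multiplicative convention) and let `K₀ ⊆ K` be a subfield that is
relatively algebraically closed in `K`, equipped with the restricted valuation
`v.comap K₀.subtype` (whose valuation ring is `O_K ∩ K₀`).  Then `K₀` is
henselian: its valuation ring is a henselian local ring. -/
theorem stmt_10 {K : Type*} [Field K] {Γ₀ : Type*} [LinearOrderedCommGroupWithZero Γ₀]
    (v : Valuation K Γ₀) (hsurj : Function.Surjective v)
    [HenselianLocalRing v.valuationSubring]
    (K₀ : Subfield K) (hrac : ∀ x : K, IsAlgebraic K₀ x → x ∈ K₀) :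
    HenselianLocalRing (v.comap K₀.subtype).valuationSubring := by
  set w := v.comap K₀.subtype with hw
  constructor
  intro f hf a₀ ha₀ h'
  -- the inclusion of valuation rings
  let φ : w.valuationSubring →+* v.valuationSubring :=
    { toFun := fun x => ⟨((x : K₀) : K), x.2⟩
      map_one' := rfl
      map_mul' := fun _ _ => rfl
      map_zero' := rfl
      map_add' := fun _ _ => rfl }
  have hφval : ∀ x : w.valuationSubring, v ((φ x : K)) = w (x : K₀) := fun _ => rfl
  have hφinj : Function.Injective φ := by
    intro x y h
    apply Subtype.ext
    apply Subtype.ext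
    exact congrArg (fun z : v.valuationSubring => (z : K)) h
  let g := f.map φ
  have hg : g.Monic := hf.map φ
  have hg₀ : g.eval (φ a₀) ∈ IsLocalRing.maximalIdeal v.valuationSubring := by
    have : g.eval (φ a₀) = φ (f.eval a₀) := by
      simp [g, Polynomial.eval_map, Polynomial.eval₂_hom]
    rw [this, aux_mem_maximalIdeal_iff, hφval]
    exact (aux_mem_maximalIdeal_iff w _).mp ha₀
  have hg' : IsUnit (g.derivative.eval (φ a₀)) := by
    have : g.derivative.eval (φ a₀) = φ (f.derivative.eval a₀) := by
      simp [g, Polynomial.derivative_map, Polynomial.eval_map, Polynomial.eval₂_hom]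
    rw [this]
    exact h'.map φ
  obtain ⟨a, haroot, hamem⟩ := HenselianLocalRing.is_henselian g hg (φ a₀) hg₀ hg'
  -- `a` is algebraic over K₀
  have halg : IsAlgebraic K₀ ((a : K)) := by
    refine ⟨f.map (SubringClass.subtype w.valuationSubring), ?_, ?_⟩
    · exact (hf.map _).ne_zero
    · have hcomm : (algebraMap K₀ K).comp (SubringClass.subtype w.valuationSubring)
          = (SubringClass.subtype v.valuationSubring).comp φ := by
        ext x; rfl
      rw [Polynomial.aeval_def, Polynomial.eval₂_eq_eval_map, Polynomial.map_map, hcomm,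
        ← Polynomial.map_map]
      have h2 : ((a : K)) = (SubringClass.subtype v.valuationSubring) a := rfl
      rw [Polynomial.eval_map, h2, Polynomial.eval₂_at_apply]
      rw [show Polynomial.eval a (Polynomial.map φ f) = 0 from haroot, map_zero]
  have haK₀ : (a : K) ∈ K₀ := hrac _ halg
  set b : w.valuationSubring := ⟨⟨(a : K), haK₀⟩, (a.2 : v ((a : K)) ≤ 1)⟩ with hb
  have hφb : φ b = a := Subtype.ext rfl
  refine ⟨b, ?_, ?_⟩
  · -- it is a root of f
    show Polynomial.eval b f = 0
    apply hφinj
    rw [map_zero, ← Polynomial.eval₂_at_apply, ← Polynomial.eval_map, hφb]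
    exact haroot
  · rw [aux_mem_maximalIdeal_iff]
    have := (aux_mem_maximalIdeal_iff v _).mp hamem
    exact this
end

section
/- Let K be a henselian valued field whose residue field k is algebraically closed of characteristic 0, and let K₀ ⊆ K be a subfield that is relatively algebraically closed in K, equipped with the restricted valuation. Then the residue field k₀ of K₀ is algebraically closed. -/
open Polynomial IsLocalRing

/-- Let `K` be a henselian valued field (surjective valuation
`v : K → Γ₀`, multiplicative convention) whose residue field is algebraically
closed of characteristic 0, and let `K₀ ⊆ K` be a subfield that is relatively
algebraically closed in `K`, equipped with the restricted valuation
`v.comap K₀.subtype` (whose valuation ring is `O_K ∩ K₀`).  Then the residue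
field `k₀` of `K₀` is algebraically closed. -/
theorem stmt_11 {K : Type*} [Field K] {Γ₀ : Type*} [LinearOrderedCommGroupWithZero Γ₀]
    (v : Valuation K Γ₀) (hsurj : Function.Surjective v)
    [HenselianLocalRing v.valuationSubring]
    [IsAlgClosed (IsLocalRing.ResidueField v.valuationSubring)]
    [CharZero (IsLocalRing.ResidueField v.valuationSubring)]
    (K₀ : Subfield K) (hrac : ∀ x : K, IsAlgebraic K₀ x → x ∈ K₀) :
    IsAlgClosed (IsLocalRing.ResidueField (v.comap K₀.subtype).valuationSubring) := by
  set R₀ := (v.comap K₀.subtype).valuationSubring with hR₀def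
  set R := v.valuationSubring with hRdef
  -- the inclusion of valuation rings
  have hmem : ∀ x : R₀, (x : K₀).1 ∈ R := fun x => x.2
  let φ : R₀ →+* R :=
    { toFun := fun x => ⟨(x : K₀).1, hmem x⟩
      map_one' := rfl
      map_mul' := fun _ _ => rfl
      map_zero' := rfl
      map_add' := fun _ _ => rfl }
  have hφ : IsLocalHom φ := by
    constructor
    intro x hx
    rw [isUnit_iff_exists_inv] at hx ⊢
    obtain ⟨y, hy⟩ := hx
    have hxKne : (((x : K₀) : K)) ≠ 0 := by
      intro h
      apply one_ne_zero (α := R)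
      rw [← hy]
      have : φ x = 0 := by ext; exact h
      rw [this, zero_mul]
    have hxne : (x : K₀) ≠ 0 := fun h => hxKne (by rw [h]; rfl)
    have hmul : ((x : K₀) : K) * (y : K) = 1 := by
      have := congrArg (fun z : R => (z : K)) hy
      exact this
    have hyval : ((y : K) : K) = ((x : K₀) : K)⁻¹ := eq_inv_of_mul_eq_one_right hmul
    have hinv : ((x : K₀)⁻¹ : K₀) ∈ R₀ := by
      show v (K₀.subtype _) ≤ 1
      rw [map_inv₀]
      show v (((x : K₀) : K))⁻¹ ≤ 1
      rw [← hyval]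
      exact y.2
    refine ⟨⟨(x : K₀)⁻¹, hinv⟩, ?_⟩
    ext
    push_cast
    exact mul_inv_cancel₀ hxKne
  letI := hφ
  let φbar := IsLocalRing.ResidueField.map φ
  have hφbarinj : Function.Injective φbar := φbar.injective
  haveI : CharZero (ResidueField R₀) := RingHom.charZero_iff hφbarinj |>.mpr ‹_›
  apply IsAlgClosed.of_exists_root
  intro p hpm hpirr
  -- lift p to a monic polynomial over R₀
  have hlift : p ∈ Polynomial.lifts (IsLocalRing.residue R₀) := by
    rw [Polynomial.lifts_iff_coeff_lifts]
    exact fun n => IsLocalRing.residue_surjective (p.coeff n)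
  obtain ⟨F, hFmap, _, hFmonic⟩ := Polynomial.lifts_and_degree_eq_and_monic hlift hpm
  -- map to R
  set G : R[X] := F.map φ with hGdef
  have hGmonic : G.Monic := hFmonic.map φ
  have hcomm : (IsLocalRing.residue R).comp φ = φbar.comp (IsLocalRing.residue R₀) :=
    RingHom.ext fun x => (IsLocalRing.ResidueField.map_residue φ x).symm
  have hGres : G.map (IsLocalRing.residue R) = p.map φbar := by
    rw [hGdef, Polynomial.map_map, hcomm, ← Polynomial.map_map, hFmap]
  -- a root α of p.map φbar in the residue field of R
  have hpφdeg : (p.map φbar).degree ≠ 0 := by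
    rw [Polynomial.degree_map_eq_of_injective hφbarinj]
    exact (Polynomial.degree_pos_of_irreducible hpirr).ne'
  obtain ⟨α, hα⟩ := IsAlgClosed.exists_root (p.map φbar) hpφdeg
  -- α is a simple root
  have hsep : (p.map φbar).Separable := (hpirr.separable).map
  have hder : (p.map φbar).derivative.eval α ≠ 0 := by
    intro h
    obtain ⟨a, b, hab⟩ := hsep
    rw [Polynomial.derivative_map] at h
    have := congrArg (Polynomial.eval α) hab
    simp [hα.eq_zero, h] at this
  -- lift α to a₀ : R and apply Hensel's lemma
  obtain ⟨a₀, ha₀⟩ := IsLocalRing.residue_surjective (R := R) α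
  have hGeval : G.eval a₀ ∈ IsLocalRing.maximalIdeal R := by
    rw [← Ideal.Quotient.eq_zero_iff_mem]
    have : IsLocalRing.residue R (G.eval a₀) = (p.map φbar).eval α := by
      rw [← ha₀, ← Polynomial.eval₂_hom, ← Polynomial.eval_map, hGres]
    show IsLocalRing.residue R (G.eval a₀) = 0
    rw [this]
    exact hα.eq_zero
  have hGder : IsUnit (G.derivative.eval a₀) := by
    by_contra h
    apply hder
    have hm : G.derivative.eval a₀ ∈ IsLocalRing.maximalIdeal R := h
    rw [← Ideal.Quotient.eq_zero_iff_mem] at hm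
    have hm' : IsLocalRing.residue R (G.derivative.eval a₀) = 0 := hm
    have heq : IsLocalRing.residue R (G.derivative.eval a₀)
        = (p.map φbar).derivative.eval α := by
      rw [← ha₀, ← Polynomial.eval₂_hom, ← Polynomial.eval_map,
        ← Polynomial.derivative_map, hGres]
    rw [heq] at hm'
    exact hm'
  obtain ⟨a, haroot, hamem⟩ := HenselianLocalRing.is_henselian G hGmonic a₀ hGeval hGder
  have hares : IsLocalRing.residue R a = α := by
    rw [← ha₀]
    rw [← sub_eq_zero, ← map_sub]
    exact Ideal.Quotient.eq_zero_iff_mem.mpr hamem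
  -- a is algebraic over K₀, hence a ∈ K₀
  have halg : IsAlgebraic K₀ ((a : K) : K) := by
    refine ⟨F.map (R₀.subtype), fun h => ?_, ?_⟩
    · exact (hFmonic.map (R₀.subtype)).ne_zero h
    · have h1 : Polynomial.eval₂ φ a F = 0 := by
        rw [← Polynomial.eval_map, ← hGdef]; exact haroot
      have h2 := Polynomial.hom_eval₂ F φ (R.subtype) a
      rw [h1, map_zero] at h2
      have hcomp : (R.subtype).comp φ = (algebraMap K₀ K).comp (R₀.subtype) := by
        ext x; rfl
      rw [hcomp] at h2
      rw [Polynomial.aeval_def, Polynomial.eval₂_map]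
      exact h2.symm
  have haK₀ : ((a : K) : K) ∈ K₀ := hrac _ halg
  -- pull back to R₀
  have hbmem : (⟨((a : K) : K), haK₀⟩ : K₀) ∈ R₀ := a.2
  set b : R₀ := ⟨⟨((a : K) : K), haK₀⟩, hbmem⟩ with hbdef
  have hφb : φ b = a := by ext; rfl
  refine ⟨IsLocalRing.residue R₀ b, ?_⟩
  apply hφbarinj
  rw [map_zero]
  calc φbar (p.eval (IsLocalRing.residue R₀ b))
      = (p.map φbar).eval (φbar (IsLocalRing.residue R₀ b)) := by
        rw [← Polynomial.eval₂_hom, ← Polynomial.eval_map]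
    _ = (p.map φbar).eval α := by
        rw [IsLocalRing.ResidueField.map_residue, hφb, hares]
    _ = 0 := hα.eq_zero
end

section
/- Let Γ be a Z-group, i.e., an ordered abelian group with a least positive element 1 such that for every γ ∈ Γ and every integer n ≥ 1 there exists i ∈ {0, 1, …, n−1} with γ − i·1 ∈ nΓ. Let Γ₀ ≤ Γ be a subgroup with 1 ∈ Γ₀. Then for all α, β, γ ∈ Γ₀ and every integer n ≥ 1: if there exists η ∈ Γ with α < η < β and η − γ ∈ nΓ, then there exists η₀ ∈ Γ₀ with α < η₀ < β and η₀ − γ ∈ nΓ. -/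
lemma aux_discrete {Γ : Type*} [AddCommGroup Γ] [LinearOrder Γ] [IsOrderedAddMonoid Γ]
    (one : Γ) (hleast : ∀ δ : Γ, 0 < δ → one ≤ δ) :
    ∀ n : ℕ, ∀ δ : Γ, 0 < δ → δ ≤ (n : ℤ) • one → ∃ j : ℕ, δ = (j : ℤ) • one := by
  intro n
  induction n with
  | zero => intro δ h1 h2; simp at h2; exact absurd (lt_of_lt_of_le h1 h2) (lt_irrefl 0)
  | succ n ih =>
    intro δ h1 h2
    have hge := hleast δ h1
    rcases lt_or_eq_of_le hge with hlt | heq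
    · have h1' : 0 < δ - one := sub_pos.mpr hlt
      have h2' : δ - one ≤ (n : ℤ) • one := by
        have : ((n+1 : ℕ) : ℤ) • one = (n : ℤ) • one + one := by
          push_cast
          rw [add_smul, one_smul]
        rw [this] at h2
        exact sub_le_iff_le_add.mpr h2
      obtain ⟨j, hj⟩ := ih (δ - one) h1' h2'
      refine ⟨j + 1, ?_⟩
      have : δ = (δ - one) + one := by abel
      rw [this, hj]
      push_cast
      rw [add_smul, one_smul]
    · exact ⟨1, by simp [← heq]⟩

/-- Let `Γ` be a Z-group: a linearly ordered abelian group with a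
least positive element `one` such that for every `γ ∈ Γ` and `n ≥ 1` there is
`0 ≤ i < n` with `γ - i • one ∈ nΓ`.  Let `Γ₀ ≤ Γ` be a subgroup with
`one ∈ Γ₀`.  Then for all `α, β, γ ∈ Γ₀` and `n ≥ 1`: if some `η ∈ Γ` satisfies
`α < η < β` and `η - γ ∈ nΓ`, then some `η₀ ∈ Γ₀` satisfies `α < η₀ < β` and
`η₀ - γ ∈ nΓ`. -/
theorem stmt_12 {Γ : Type*} [AddCommGroup Γ] [LinearOrder Γ] [IsOrderedAddMonoid Γ]
    (one : Γ) (hpos : 0 < one) (hleast : ∀ δ : Γ, 0 < δ → one ≤ δ)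
    (hZ : ∀ (γ : Γ) (n : ℕ), 1 ≤ n → ∃ i : ℕ, i < n ∧ ∃ δ : Γ, γ - (i : ℤ) • one = (n : ℤ) • δ)
    (Γ₀ : AddSubgroup Γ) (hone : one ∈ Γ₀)
    (α β γ : Γ) (hα : α ∈ Γ₀) (hβ : β ∈ Γ₀) (hγ : γ ∈ Γ₀)
    (n : ℕ) (hn : 1 ≤ n)
    (hex : ∃ η : Γ, α < η ∧ η < β ∧ ∃ δ : Γ, η - γ = (n : ℤ) • δ) :
    ∃ η₀ ∈ Γ₀, α < η₀ ∧ η₀ < β ∧ ∃ δ : Γ, η₀ - γ = (n : ℤ) • δ := by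
  obtain ⟨η, hαη, hηβ, δ₁, hδ₁⟩ := hex
  by_cases hcase : α + (n : ℤ) • one < β
  · -- wide interval: use hZ
    obtain ⟨i, hi, δ, hδ⟩ := hZ (α - γ) n hn
    refine ⟨α + ((n - i : ℕ) : ℤ) • one, ?_, ?_, ?_, δ + one, ?_⟩
    · exact Γ₀.add_mem hα (Γ₀.zsmul_mem hone _)
    · have hni : 1 ≤ n - i := Nat.le_sub_of_add_le (by omega)
      have : (0 : Γ) < ((n - i : ℕ) : ℤ) • one := by
        apply smul_pos _ hpos
        exact_mod_cast hni
      exact lt_add_of_pos_right α this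
    · have h1 : ((n - i : ℕ) : ℤ) • one ≤ (n : ℤ) • one := by
        apply smul_le_smul_of_nonneg_right _ hpos.le
        exact_mod_cast Nat.sub_le n i
      exact lt_of_le_of_lt (add_le_add_right h1 α) hcase
    · have hni : ((n - i : ℕ) : ℤ) = (n : ℤ) - (i : ℤ) := by
        push_cast [Nat.cast_sub hi.le]; ring
      rw [hni, smul_add, sub_smul]
      have := hδ
      have : α - γ - (i : ℤ) • one = (n : ℤ) • δ := hδ
      have goal : α + ((n : ℤ) • one - (i : ℤ) • one) - γ =
          (α - γ - (i : ℤ) • one) + (n : ℤ) • one := by abel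
      rw [goal, hδ]
  · -- narrow interval: η itself lies in Γ₀
    push_neg at hcase
    have h1 : 0 < η - α := sub_pos.mpr hαη
    have h2 : η - α ≤ (n : ℤ) • one := by
      have : η < α + (n : ℤ) • one := lt_of_lt_of_le hηβ hcase
      exact sub_le_iff_le_add'.mpr this.le
    obtain ⟨j, hj⟩ := aux_discrete one hleast n (η - α) h1 h2
    have hη₀ : η ∈ Γ₀ := by
      have : η = α + (j : ℤ) • one := by rw [← hj]; abel
      rw [this]
      exact Γ₀.add_mem hα (Γ₀.zsmul_mem hone _)
    exact ⟨η, hη₀, hαη, hηβ, δ₁, hδ₁⟩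
end
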